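/- arXiv:2106.06084 — 5 statements merged into one kernel-verified Lean document; each statement's English description precedes it below -/
import Mathlib

section
/- Let p be a prime and let u_n = h_n / n!, where h_n is the number of elements of p-power order in the symmetric group S_n (including the identity). Then u_n equals the n-th coefficient of the Artin-Hasse exponential exp(Σ_{k≥0} x^{p^k}/p^k). -/
open PowerSeries Classical

noncomputable def AHinner (p : ℕ) : PowerSeries ℚ :=
  PowerSeries.mk fun n => if ∃ k, n = p ^ k then (1 : ℚ) / n else 0

noncomputable def AHexp (p : ℕ) : PowerSeries ℚ :=
  PowerSeries.mk fun n =>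
    ∑ m ∈ Finset.range (n + 1), PowerSeries.coeff n ((AHinner p) ^ m) / (m.factorial : ℚ)

/-- `h p n` is the number of elements of `p`-power order in the symmetric group `S_n`
(including the identity, of order `p^0 = 1`). -/
noncomputable def hcount (p n : ℕ) : ℕ :=
  Nat.card {σ : Equiv.Perm (Fin n) // ∃ k, orderOf σ = p ^ k}

namespace AH


variable (p : ℕ)

lemma coeff_inner (n : ℕ) :
    coeff n (AHinner p) = if ∃ k, n = p ^ k then (1 : ℚ) / n else 0 := by
  simp [AHinner]

lemma coeff_inner_zero : coeff 0 (AHinner p) = 0 := by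
  rw [coeff_inner]; split_ifs <;> simp

lemma coeff_pow_eq_zero : ∀ {m n : ℕ}, n < m → coeff n ((AHinner p) ^ m) = 0 := by
  intro m
  induction m with
  | zero => omega
  | succ m ih =>
    intro n h
    rw [pow_succ, coeff_mul]
    apply Finset.sum_eq_zero
    rintro ⟨i, j⟩ hij
    rw [Finset.HasAntidiagonal.mem_antidiagonal] at hij
    rcases Nat.eq_zero_or_pos j with hj | hj
    · subst hj
      simp [coeff_inner_zero]
    · have : i < m := by omega
      rw [ih this, zero_mul]

lemma coeff_d (j : ℕ) :
    coeff j (d⁄dX ℚ (AHinner p)) = if ∃ k, j + 1 = p ^ k then 1 else 0 := by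
  rw [coeff_derivative, coeff_inner]
  split_ifs with h
  · push_cast
    rw [div_mul_cancel₀]
    positivity
  · rw [zero_mul]

lemma coeff_AHexp (n : ℕ) :
    coeff n (AHexp p) =
      ∑ m ∈ Finset.range (n + 1), coeff n ((AHinner p) ^ m) / (m.factorial : ℚ) := by
  simp [AHexp]

lemma coeff_AHexp_zero : coeff 0 (AHexp p) = 1 := by
  simp [coeff_AHexp]

lemma coeff_AHexp' {n M : ℕ} (h : n ≤ M) :
    coeff n (AHexp p) =
      ∑ m ∈ Finset.range (M + 1), coeff n ((AHinner p) ^ m) / (m.factorial : ℚ) := by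
  rw [coeff_AHexp]
  apply Finset.sum_subset
  · intro x hx
    simp only [Finset.mem_range] at *
    omega
  · intro x _ hx
    simp only [Finset.mem_range, not_lt] at hx
    rw [coeff_pow_eq_zero p (by omega), zero_div]

lemma AHexp_rec (N : ℕ) :
    ((N : ℚ) + 1) * coeff (N + 1) (AHexp p) =
      ∑ i ∈ Finset.range (N + 1),
        (if ∃ k, (N - i) + 1 = p ^ k then coeff i (AHexp p) else 0) := by
  set g := AHinner p with hg
  rw [coeff_AHexp, Finset.mul_sum]
  have step1 : ∀ m ∈ Finset.range (N + 2),
      ((N : ℚ) + 1) * (coeff (N + 1) (g ^ m) / (m.factorial : ℚ)) =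
        (m : ℚ) * coeff N (g ^ (m - 1) * d⁄dX ℚ g) / (m.factorial : ℚ) := by
    intro m _
    have hD : coeff N (d⁄dX ℚ (g ^ m)) = coeff (N + 1) (g ^ m) * ((N : ℚ) + 1) := by
      rw [coeff_derivative]
    have hL : d⁄dX ℚ (g ^ m) = (m : ℚ⟦X⟧) • (g ^ (m - 1) • d⁄dX ℚ g) := by
      have := Derivation.leibniz_pow (d⁄dX ℚ) (a := g) m
      simpa using this
    have : coeff N (d⁄dX ℚ (g ^ m)) = (m : ℚ) * coeff N (g ^ (m - 1) * d⁄dX ℚ g) := by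
      rw [hL]
      simp only [smul_eq_mul]
      rw [← map_natCast (C (R := ℚ)) m, coeff_C_mul]
    rw [mul_comm ((N : ℚ) + 1), div_mul_eq_mul_div, ← hD, this]
  rw [Finset.sum_congr rfl step1]
  rw [Finset.sum_range_succ']
  simp only [Nat.cast_zero, zero_mul, zero_div, add_zero]
  have step2 : ∀ m ∈ Finset.range (N + 1),
      ((m : ℚ) + 1) * coeff N (g ^ m * d⁄dX ℚ g) / ((m+1).factorial : ℚ) =
        coeff N (g ^ m * d⁄dX ℚ g) / (m.factorial : ℚ) := by
    intro m _
    rw [Nat.factorial_succ]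
    have h1 : ((m : ℚ) + 1) ≠ 0 := by positivity
    have h2 : ((m.factorial : ℚ)) ≠ 0 := by positivity
    push_cast
    field_simp
  simp only [Nat.add_sub_cancel, Nat.cast_add, Nat.cast_one]
  rw [Finset.sum_congr rfl step2]
  have step3 : ∀ m ∈ Finset.range (N + 1),
      coeff N (g ^ m * d⁄dX ℚ g) / (m.factorial : ℚ) =
        ∑ ij ∈ Finset.HasAntidiagonal.antidiagonal N,
          (coeff ij.1 (g ^ m) / (m.factorial : ℚ)) * coeff ij.2 (d⁄dX ℚ g) := by
    intro m _
    rw [PowerSeries.coeff_mul, Finset.sum_div]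
    apply Finset.sum_congr rfl
    intro ij _
    ring
  rw [Finset.sum_congr rfl step3, Finset.sum_comm]
  have step4 : ∀ ij ∈ Finset.HasAntidiagonal.antidiagonal N,
      (∑ m ∈ Finset.range (N + 1),
        (coeff ij.1 (g ^ m) / (m.factorial : ℚ)) * coeff ij.2 (d⁄dX ℚ g)) =
        (if ∃ k, ij.2 + 1 = p ^ k then coeff ij.1 (AHexp p) else 0) := by
    rintro ⟨i, l⟩ hij
    rw [Finset.HasAntidiagonal.mem_antidiagonal] at hij
    simp only
    rw [← Finset.sum_mul, ← coeff_AHexp' p (show i ≤ N by omega), coeff_d]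
    split_ifs <;> simp
  rw [Finset.sum_congr rfl step4, Finset.Nat.sum_antidiagonal_eq_sum_range_succ_mk]


open Equiv Function Finset


open Equiv Function Finset

def PP (p : ℕ) {α : Type*} (σ : Equiv.Perm α) : Prop := ∃ k, orderOf σ = p ^ k

lemma hcount_eq (p n : ℕ) : hcount p n = Nat.card {σ : Equiv.Perm (Fin n) // PP p σ} := rfl

variable {p : ℕ}

lemma pp_of_dvd (hp : p.Prime) {α : Type*} {σ : Equiv.Perm α} {K : ℕ}
    (h : orderOf σ ∣ p ^ K) : PP p σ := by
  obtain ⟨k, _, hk⟩ := (Nat.dvd_prime_pow hp).mp h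
  exact ⟨k, hk⟩

noncomputable def permCongrMul {α β : Type*} (e : α ≃ β) : Equiv.Perm α ≃* Equiv.Perm β :=
  { e.permCongr with
    map_mul' := fun σ τ => by
      ext b
      simp [Equiv.permCongr_apply] }

lemma card_pp (α : Type*) [Fintype α] :
    Nat.card {σ : Equiv.Perm α // PP p σ} = hcount p (Fintype.card α) := by
  rw [hcount_eq]
  apply Nat.card_congr
  refine Equiv.subtypeEquiv (permCongrMul (Fintype.equivFin α)).toEquiv (fun σ => ?_)
  unfold PP
  rw [show ((permCongrMul (Fintype.equivFin α)).toEquiv σ)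
      = (permCongrMul (Fintype.equivFin α)) σ from rfl,
    MulEquiv.orderOf_eq]

lemma hcount_zero : hcount p 0 = 1 := by
  rw [hcount_eq]
  haveI : Subsingleton (Equiv.Perm (Fin 0)) := ⟨fun a b => Equiv.ext fun x => x.elim0⟩
  haveI : Nonempty {σ : Equiv.Perm (Fin 0) // PP p σ} :=
    ⟨⟨1, 0, by simp⟩⟩
  exact Nat.card_unique

section Main

variable {N j : ℕ}

attribute [local instance] Classical.propDecidable

/-- predicate: `x` avoids `0` and the range of `t`. -/
def Q (t : Fin j ↪ {x : Fin (N+1) // x ≠ 0}) (x : Fin (N+1)) : Prop :=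
  x ≠ 0 ∧ ∀ i : Fin j, x ≠ (t i : Fin (N+1))

def theL (t : Fin j ↪ {x : Fin (N+1) // x ≠ 0}) : List (Fin (N+1)) :=
  0 :: List.ofFn (fun i : Fin j => (t i : Fin (N+1)))

lemma theL_def (t : Fin j ↪ {x : Fin (N+1) // x ≠ 0}) :
    theL t = 0 :: List.ofFn (fun i : Fin j => (t i : Fin (N+1))) := rfl

lemma lenL (t : Fin j ↪ {x : Fin (N+1) // x ≠ 0}) : (theL t).length = j + 1 := by
  simp [theL]

lemma ndL (t : Fin j ↪ {x : Fin (N+1) // x ≠ 0}) : (theL t).Nodup := by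
  rw [theL, List.nodup_cons, List.nodup_ofFn]
  constructor
  · simp only [List.mem_ofFn, Set.mem_range, not_exists]
    intro i hi
    exact (t i).2 hi
  · intro a b hab
    exact t.injective (Subtype.ext hab)

lemma mem_theL {t : Fin j ↪ {x : Fin (N+1) // x ≠ 0}} {x : Fin (N+1)} :
    x ∈ theL t ↔ ¬ Q t x := by
  simp only [theL, Q, List.mem_cons, List.mem_ofFn, Set.mem_range, not_and, not_forall,
    not_not, ne_eq]
  constructor
  · rintro (rfl | ⟨i, hi⟩)
    · intro h; exact absurd rfl h
    · intro _; exact ⟨i, hi.symm⟩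
  · intro h
    by_cases hx : x = 0
    · exact Or.inl hx
    · obtain ⟨i, hi⟩ := h hx
      exact Or.inr ⟨i, hi.symm⟩

lemma getL_zero (t : Fin j ↪ {x : Fin (N+1) // x ≠ 0}) :
    (theL t)[0]'(by simp [lenL]) = 0 := rfl

lemma getL_succ (t : Fin j ↪ {x : Fin (N+1) // x ≠ 0}) (i : ℕ) (h : i < j) :
    (theL t)[i+1]'(by rw [lenL]; omega) = (t ⟨i, h⟩ : Fin (N+1)) := by
  simp [theL]

noncomputable def bwdPerm (t : Fin j ↪ {x : Fin (N+1) // x ≠ 0})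
    (τ : Equiv.Perm {x : Fin (N+1) // Q t x}) : Equiv.Perm (Fin (N+1)) :=
  (theL t).formPerm * Equiv.Perm.ofSubtype τ

lemma disjL (t : Fin j ↪ {x : Fin (N+1) // x ≠ 0})
    (τ : Equiv.Perm {x : Fin (N+1) // Q t x}) :
    Equiv.Perm.Disjoint (theL t).formPerm (Equiv.Perm.ofSubtype τ) := by
  intro x
  by_cases hx : x ∈ theL t
  · exact Or.inr (Equiv.Perm.ofSubtype_apply_of_not_mem τ (mem_theL.mp hx))
  · exact Or.inl (List.formPerm_apply_of_notMem hx)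

lemma bwd_pow_apply_zero (t : Fin j ↪ {x : Fin (N+1) // x ≠ 0})
    (τ : Equiv.Perm {x : Fin (N+1) // Q t x}) (n : ℕ) :
    ((bwdPerm t τ) ^ n) 0 =
      (theL t)[n % (j+1)]'(by rw [lenL]; exact Nat.mod_lt _ (Nat.succ_pos _)) := by
  rw [bwdPerm, (disjL t τ).commute.mul_pow, Equiv.Perm.mul_apply, ← map_pow,
    Equiv.Perm.ofSubtype_apply_of_not_mem _ (by simp [Q])]
  have := List.formPerm_pow_apply_head (0 : Fin (N+1))
    (List.ofFn (fun i : Fin j => (t i : Fin (N+1)))) (by rw [← theL_def]; exact ndL t) n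
  simp only [← theL_def, lenL] at this
  exact this

lemma orderOf_formPerm_theL (t : Fin j ↪ {x : Fin (N+1) // x ≠ 0}) :
    orderOf (theL t).formPerm = j + 1 := by
  rcases Nat.eq_zero_or_pos j with rfl | hj
  · have : theL t = [0] := by simp [theL]
    rw [this, List.formPerm_singleton, orderOf_one]
  · have hc := List.isCycle_formPerm (ndL t) (by rw [lenL]; omega)
    rw [hc.orderOf, List.support_formPerm_of_nodup _ (ndL t) ?h',
      List.toFinset_card_of_nodup (ndL t), lenL]
    intro x hx
    apply_fun List.length at hx
    rw [lenL] at hx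
    simp at hx
    omega

lemma ofSubtype_inj {α : Type*} {q : α → Prop} [DecidablePred q] :
    Function.Injective
      (Equiv.Perm.ofSubtype : Equiv.Perm (Subtype q) →* Equiv.Perm α) := by
  intro a b h
  ext x
  have := congrArg (fun f : Equiv.Perm α => f (x : α)) h
  simp only [Equiv.Perm.ofSubtype_apply_of_mem _ x.2] at this
  simpa using this

lemma pp_bwd (hp : p.Prime) (hpk : ∃ k, j + 1 = p ^ k)
    {t : Fin j ↪ {x : Fin (N+1) // x ≠ 0}}
    {τ : Equiv.Perm {x : Fin (N+1) // Q t x}} (hτ : PP p τ) :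
    PP p (bwdPerm t τ) := by
  obtain ⟨k, hk⟩ := hpk
  obtain ⟨k', hk'⟩ := hτ
  rw [bwdPerm]
  have hord : orderOf (Equiv.Perm.ofSubtype τ) = p ^ k' := by
    rw [orderOf_injective _ ofSubtype_inj τ, hk']
  apply pp_of_dvd hp (K := max k k')
  rw [(disjL t τ).orderOf, orderOf_formPerm_theL, hk, hord]
  exact Nat.lcm_dvd (pow_dvd_pow p (le_max_left _ _)) (pow_dvd_pow p (le_max_right _ _))

lemma getL_eq_zero_iff (t : Fin j ↪ {x : Fin (N+1) // x ≠ 0}) (r : ℕ) (h : r < j + 1) :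
    (theL t)[r]'(by rw [lenL]; exact h) = 0 ↔ r = 0 := by
  constructor
  · intro hr
    have h00 : (theL t)[0]'(by rw [lenL]; omega) = 0 := getL_zero t
    rw [← h00] at hr
    exact (List.Nodup.getElem_inj_iff (ndL t)).mp hr
  · rintro rfl
    exact getL_zero t

lemma mp_bwd (t : Fin j ↪ {x : Fin (N+1) // x ≠ 0})
    (τ : Equiv.Perm {x : Fin (N+1) // Q t x}) :
    minimalPeriod ⇑(bwdPerm t τ) 0 = j + 1 := by
  have key : ∀ n, (⇑(bwdPerm t τ))^[n] 0 =
      (theL t)[n % (j+1)]'(by rw [lenL]; exact Nat.mod_lt _ (Nat.succ_pos _)) := by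
    intro n
    rw [← Equiv.Perm.coe_pow]
    exact bwd_pow_apply_zero t τ n
  have hper : IsPeriodicPt ⇑(bwdPerm t τ) (j+1) 0 := by
    show _ = _
    rw [key (j+1)]
    exact (getL_eq_zero_iff t _ (Nat.mod_lt _ (Nat.succ_pos _))).mpr (Nat.mod_self _)
  have h1 : minimalPeriod ⇑(bwdPerm t τ) 0 ≤ j + 1 :=
    hper.minimalPeriod_le (by omega)
  have h0 : 0 < minimalPeriod ⇑(bwdPerm t τ) 0 :=
    hper.minimalPeriod_pos (by omega)
  by_contra hne
  have hlt : minimalPeriod ⇑(bwdPerm t τ) 0 < j + 1 := lt_of_le_of_ne h1 hne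
  have := isPeriodicPt_minimalPeriod ⇑(bwdPerm t τ) 0
  rw [IsPeriodicPt, IsFixedPt, key] at this
  have := (getL_eq_zero_iff t _ (Nat.mod_lt _ (Nat.succ_pos _))).mp this
  rw [Nat.mod_eq_of_lt hlt] at this
  omega


variable {σ : Equiv.Perm (Fin (N+1))}

lemma perm_pow_mod (hmp : minimalPeriod ⇑σ 0 = j + 1) (m : ℕ) :
    (σ ^ (m % (j+1))) 0 = (σ ^ m) 0 := by
  simp only [Equiv.Perm.coe_pow]
  rw [← hmp]
  exact iterate_mod_minimalPeriod_eq

lemma perm_distinct (hmp : minimalPeriod ⇑σ 0 = j + 1) {a b : ℕ}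
    (ha : a < j + 1) (hb : b < j + 1) (h : (σ ^ a) 0 = (σ ^ b) 0) : a = b := by
  simp only [Equiv.Perm.coe_pow] at h
  exact iterate_injOn_Iio_minimalPeriod (by rw [hmp]; exact ha) (by rw [hmp]; exact hb) h

def Orb (σ : Equiv.Perm (Fin (N+1))) : Set (Fin (N+1)) :=
  Set.range (fun m : ℕ => (σ ^ m) 0)

lemma mem_orb_bounded (hmp : minimalPeriod ⇑σ 0 = j + 1) {x : Fin (N+1)} :
    x ∈ Orb σ ↔ ∃ m, m < j + 1 ∧ (σ ^ m) 0 = x := by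
  constructor
  · rintro ⟨m, rfl⟩
    exact ⟨m % (j+1), Nat.mod_lt _ (Nat.succ_pos _), perm_pow_mod hmp m⟩
  · rintro ⟨m, _, rfl⟩
    exact ⟨m, rfl⟩

lemma perm_period (hmp : minimalPeriod ⇑σ 0 = j + 1) : (σ ^ (j+1)) 0 = 0 := by
  rw [← perm_pow_mod hmp, Nat.mod_self, pow_zero]
  rfl

lemma orb_inv (hmp : minimalPeriod ⇑σ 0 = j + 1) (x : Fin (N+1)) :
    σ x ∈ Orb σ ↔ x ∈ Orb σ := by
  have hper : (σ ^ (j+1)) 0 = 0 := perm_period hmp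
  constructor
  · rintro ⟨i, hi⟩
    refine ⟨i + j, ?_⟩
    apply σ.injective
    have h1 : (σ ^ (i + j + 1)) 0 = (σ ^ i) 0 := by
      rw [show i + j + 1 = i + (j+1) by omega, pow_add, Equiv.Perm.mul_apply, hper]
    calc σ ((σ ^ (i + j)) 0) = (σ ^ (i + j + 1)) 0 := by
          rw [pow_succ', Equiv.Perm.mul_apply]
      _ = (σ ^ i) 0 := h1
      _ = σ x := hi
  · rintro ⟨m, rfl⟩
    exact ⟨m + 1, by
      show (σ ^ (m+1)) 0 = σ ((σ ^ m) 0)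
      rw [pow_succ', Equiv.Perm.mul_apply]⟩

lemma bwd_apply_ti (t : Fin j ↪ {x : Fin (N+1) // x ≠ 0})
    (τ : Equiv.Perm {x : Fin (N+1) // Q t x}) (i : Fin j) :
    ((bwdPerm t τ) ^ ((i : ℕ) + 1)) 0 = (t i : Fin (N+1)) := by
  have h := bwd_pow_apply_zero t τ ((i : ℕ) + 1)
  have hm : ((i : ℕ) + 1) % (j + 1) = (i : ℕ) + 1 := Nat.mod_eq_of_lt (by omega)
  rw [h]
  simp only [hm]
  rw [getL_succ t i i.isLt]

lemma bwd_apply_q (t : Fin j ↪ {x : Fin (N+1) // x ≠ 0})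
    (τ : Equiv.Perm {x : Fin (N+1) // Q t x}) (x : {x : Fin (N+1) // Q t x}) :
    (bwdPerm t τ) (x : Fin (N+1)) = (τ x : Fin (N+1)) := by
  rw [bwdPerm, Equiv.Perm.mul_apply, Equiv.Perm.ofSubtype_apply_of_mem τ x.2]
  exact List.formPerm_apply_of_notMem (fun hmem => (mem_theL.mp hmem) (τ x).2)

lemma card_Q (t : Fin j ↪ {x : Fin (N+1) // x ≠ 0}) :
    Fintype.card {x : Fin (N+1) // Q t x} = N - j := by
  classical
  have hiff : ∀ x : Fin (N+1), Q t x ↔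
      x ∉ (insert (0 : Fin (N+1))
        (Finset.image (fun i => (t i : Fin (N+1))) Finset.univ)) := by
    intro x
    simp only [Q, Finset.mem_insert, Finset.mem_image, Finset.mem_univ, true_and, not_or,
      not_exists, ne_eq]
    constructor
    · rintro ⟨h0, ht⟩
      exact ⟨h0, fun i hi => ht i hi.symm⟩
    · rintro ⟨h0, ht⟩
      exact ⟨h0, fun i hi => ht i hi.symm⟩
  have hs : (insert (0 : Fin (N+1))
      (Finset.image (fun i => (t i : Fin (N+1))) Finset.univ)).card = j + 1 := by
    rw [Finset.card_insert_of_notMem, Finset.card_image_of_injective _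
      (fun a b hab => t.injective (Subtype.ext hab)), Finset.card_univ, Fintype.card_fin]
    simp only [Finset.mem_image, Finset.mem_univ, true_and, not_exists]
    intro i hi
    exact (t i).2 hi
  rw [Fintype.card_subtype]
  have hfil : Finset.filter (fun x => Q t x) Finset.univ =
      (insert (0 : Fin (N+1)) (Finset.image (fun i => (t i : Fin (N+1))) Finset.univ))ᶜ := by
    ext x
    simp only [Finset.mem_filter, Finset.mem_univ, true_and, Finset.mem_compl]
    exact hiff x
  rw [hfil, Finset.card_compl, hs, Fintype.card_fin]
  omega

lemma card_Tsub (hp : p.Prime) (hjN : j ≤ N) (hpk : ∃ k, j + 1 = p ^ k) :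
    Nat.card {σ : Equiv.Perm (Fin (N+1)) // PP p σ ∧ minimalPeriod ⇑σ 0 = j + 1}
      = N.descFactorial j * hcount p (N - j) := by
  classical
  let F : (Σ t : Fin j ↪ {x : Fin (N+1) // x ≠ 0},
      {τ : Equiv.Perm {x : Fin (N+1) // Q t x} // PP p τ}) →
      {σ : Equiv.Perm (Fin (N+1)) // PP p σ ∧ minimalPeriod ⇑σ 0 = j + 1} :=
    fun s => ⟨bwdPerm s.1 s.2.1, pp_bwd hp hpk s.2.2, mp_bwd s.1 s.2.1⟩
  have hinj : Function.Injective F := by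
    rintro ⟨t₁, τ₁, hτ₁⟩ ⟨t₂, τ₂, hτ₂⟩ h
    have hσ : bwdPerm t₁ τ₁ = bwdPerm t₂ τ₂ := congrArg Subtype.val h
    have ht : t₁ = t₂ := by
      ext i
      rw [← bwd_apply_ti t₁ τ₁ i, ← bwd_apply_ti t₂ τ₂ i, hσ]
    subst ht
    have hττ : τ₁ = τ₂ := by
      apply Equiv.ext
      intro x
      apply Subtype.ext
      rw [← bwd_apply_q t₁ τ₁ x, ← bwd_apply_q t₁ τ₂ x, hσ]
    subst hττ
    rfl
  have hsurj : Function.Surjective F := by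
    rintro ⟨σ, hPP, hmp⟩
    have hne : ∀ i : Fin j, (σ ^ ((i:ℕ)+1)) 0 ≠ 0 := by
      intro i h
      have h0 : (σ ^ ((i:ℕ)+1)) 0 = (σ ^ 0) 0 := by simpa using h
      have := perm_distinct hmp (by omega) (by omega) h0
      omega
    let t : Fin j ↪ {x : Fin (N+1) // x ≠ 0} :=
      ⟨fun i => ⟨(σ ^ ((i:ℕ)+1)) 0, hne i⟩, by
        intro a b hab
        have hv : (σ ^ ((a:ℕ)+1)) 0 = (σ ^ ((b:ℕ)+1)) 0 := congrArg Subtype.val hab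
        have := perm_distinct hmp (by omega) (by omega) hv
        exact Fin.ext (by omega)⟩
    have htval : ∀ i : Fin j, (t i : Fin (N+1)) = (σ ^ ((i:ℕ)+1)) 0 := fun i => rfl
    have hQO : ∀ x, Q t x ↔ x ∉ Orb σ := by
      intro x
      rw [mem_orb_bounded hmp]
      constructor
      · rintro ⟨hx0, hxt⟩ ⟨m, hm, rfl⟩
        rcases Nat.eq_zero_or_pos m with rfl | hmpos
        · exact hx0 (by rw [pow_zero]; rfl)
        · refine hxt ⟨m-1, by omega⟩ ?_
          rw [htval]
          show (σ ^ m) 0 = (σ ^ (m - 1 + 1)) 0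
          rw [show m - 1 + 1 = m from by omega]
      · intro hx
        refine ⟨fun h0 => hx ⟨0, by omega, by rw [pow_zero, h0]; rfl⟩, fun i hi => ?_⟩
        exact hx ⟨(i:ℕ)+1, by omega, by rw [← htval, ← hi]⟩
    have hQinv : ∀ x, Q t x ↔ Q t (σ x) := by
      intro x
      rw [hQO, hQO]
      exact (not_congr (orb_inv hmp x)).symm
    let τ : Equiv.Perm {x : Fin (N+1) // Q t x} := σ.subtypePerm (fun x => (hQinv x).symm)
    have hτPP : PP p τ := by
      obtain ⟨K, hK⟩ := hPP
      apply pp_of_dvd hp (K := K)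
      rw [← hK]
      apply orderOf_dvd_of_pow_eq_one
      have hpow := Equiv.Perm.subtypePerm_pow σ (orderOf σ) (fun x => (hQinv x).symm)
      apply Equiv.ext
      intro x
      show ((σ.subtypePerm (fun x => (hQinv x).symm)) ^ orderOf σ) x = x
      rw [hpow]
      apply Subtype.ext
      show (σ ^ orderOf σ) (x : Fin (N+1)) = x
      rw [pow_orderOf_eq_one]
      rfl
    have hgetL : ∀ r (h : r < j + 1),
        (theL t)[r]'(by rw [lenL]; exact h) = (σ ^ r) 0 := by
      intro r h
      rcases r with _ | i
      · rw [pow_zero]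
        exact getL_zero t
      · rw [getL_succ t i (by omega)]
        rfl
    refine ⟨⟨t, τ, hτPP⟩, Subtype.ext ?_⟩
    show bwdPerm t τ = σ
    apply Equiv.ext
    intro x
    by_cases hx : x ∈ Orb σ
    · obtain ⟨m, hm, rfl⟩ := (mem_orb_bounded hmp).mp hx
      rw [bwdPerm, Equiv.Perm.mul_apply,
        Equiv.Perm.ofSubtype_apply_of_not_mem τ (fun hQ => (hQO _).mp hQ hx)]
      rw [← hgetL m hm]
      rw [List.formPerm_apply_getElem _ (ndL t) m (by rw [lenL]; exact hm)]
      have h2 : (m+1) % (j+1) < j+1 := Nat.mod_lt _ (Nat.succ_pos _)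
      simp only [lenL]
      rw [hgetL _ h2, perm_pow_mod hmp, pow_succ', Equiv.Perm.mul_apply, hgetL m hm]
    · have hQx : Q t x := (hQO x).mpr hx
      have := bwd_apply_q t τ ⟨x, hQx⟩
      rw [this]
      rfl
  rw [← Nat.card_congr (Equiv.ofBijective F ⟨hinj, hsurj⟩)]
  letI : ∀ t : Fin j ↪ {x : Fin (N+1) // x ≠ 0},
      Fintype {τ : Equiv.Perm {x : Fin (N+1) // Q t x} // PP p τ} :=
    fun t => Fintype.ofFinite _
  rw [Nat.card_eq_fintype_card, Fintype.card_sigma]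
  have hcard : ∀ t : Fin j ↪ {x : Fin (N+1) // x ≠ 0},
      Fintype.card {τ : Equiv.Perm {x : Fin (N+1) // Q t x} // PP p τ}
        = hcount p (N - j) := by
    intro t
    rw [← Nat.card_eq_fintype_card, card_pp, card_Q]
  rw [Finset.sum_congr rfl (fun t _ => hcard t), Finset.sum_const, smul_eq_mul]
  congr 1
  rw [Finset.card_univ, Fintype.card_embedding_eq, Fintype.card_fin]
  congr 1
  rw [Fintype.card_subtype_compl, Fintype.card_fin, Fintype.card_subtype_eq]
  omega


lemma mp_pos (σ : Equiv.Perm (Fin (N+1))) : 0 < minimalPeriod ⇑σ 0 := by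
  apply Function.IsPeriodicPt.minimalPeriod_pos (n := orderOf σ) (orderOf_pos σ)
  show (⇑σ)^[orderOf σ] 0 = 0
  rw [← Equiv.Perm.coe_pow, pow_orderOf_eq_one]
  rfl

lemma mp_dvd (σ : Equiv.Perm (Fin (N+1))) : minimalPeriod ⇑σ 0 ∣ orderOf σ := by
  apply Function.IsPeriodicPt.minimalPeriod_dvd
  show (⇑σ)^[orderOf σ] 0 = 0
  rw [← Equiv.Perm.coe_pow, pow_orderOf_eq_one]
  rfl

lemma mp_le (σ : Equiv.Perm (Fin (N+1))) : minimalPeriod ⇑σ 0 ≤ N + 1 := by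
  have h := Finset.card_le_card_of_injOn (f := fun m => (σ ^ m) 0)
    (s := Finset.range (minimalPeriod ⇑σ 0)) (t := Finset.univ)
    (fun _ _ => Finset.mem_univ _) ?_
  · simpa using h
  · intro a ha b hb hab
    simp only [Finset.coe_range, Set.mem_Iio] at ha hb
    exact iterate_injOn_Iio_minimalPeriod ha hb
      (by simpa [← Equiv.Perm.coe_pow] using hab)

lemma Tsub_empty (hp : p.Prime) (hpk : ¬ ∃ k, j + 1 = p ^ k) :
    IsEmpty {σ : Equiv.Perm (Fin (N+1)) // PP p σ ∧ minimalPeriod ⇑σ 0 = j + 1} := by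
  constructor
  rintro ⟨σ, ⟨K, hK⟩, hmp⟩
  have hd : minimalPeriod ⇑σ 0 ∣ p ^ K := hK ▸ mp_dvd σ
  obtain ⟨k, _, hk⟩ := (Nat.dvd_prime_pow hp).mp hd
  exact hpk ⟨k, by rw [← hmp, hk]⟩

lemma hcount_succ (hp : p.Prime) (N : ℕ) :
    hcount p (N+1) = ∑ j ∈ Finset.range (N+1),
      if ∃ k, j + 1 = p ^ k then N.descFactorial j * hcount p (N - j) else 0 := by
  classical
  rw [hcount_eq, Nat.card_eq_fintype_card, Fintype.card_subtype]
  rw [Finset.card_eq_sum_card_fiberwise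
    (f := fun ρ : Equiv.Perm (Fin (N+1)) => minimalPeriod ⇑ρ 0 - 1)
    (t := Finset.range (N+1))
    (fun ρ _ => Finset.mem_range.mpr (by
      show minimalPeriod ⇑ρ 0 - 1 < N + 1
      have h1 := mp_le ρ
      have h2 := mp_pos ρ
      omega))]
  apply Finset.sum_congr rfl
  intro j hj
  rw [Finset.mem_range] at hj
  have hfib : Finset.filter (fun ρ : Equiv.Perm (Fin (N+1)) => minimalPeriod ⇑ρ 0 - 1 = j)
      (Finset.filter (fun ρ : Equiv.Perm (Fin (N+1)) => PP p ρ) Finset.univ)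
      = Finset.filter (fun ρ : Equiv.Perm (Fin (N+1)) =>
          PP p ρ ∧ minimalPeriod ⇑ρ 0 = j + 1) Finset.univ := by
    rw [Finset.filter_filter]
    apply Finset.filter_congr
    intro ρ _
    have h2 := mp_pos ρ
    constructor
    · rintro ⟨h1, h3⟩; exact ⟨h1, by omega⟩
    · rintro ⟨h1, h3⟩; exact ⟨h1, by omega⟩
  rw [hfib, ← Fintype.card_subtype, ← Nat.card_eq_fintype_card]
  by_cases hpk : ∃ k, j + 1 = p ^ k
  · rw [if_pos hpk, card_Tsub hp (by omega) hpk]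
  · rw [if_neg hpk]
    haveI := Tsub_empty (N := N) (j := j) hp hpk
    exact Nat.card_of_isEmpty

end Main

end AH

theorem artinHasse_coeff_eq (p : ℕ) (hp : p.Prime) (n : ℕ) :
    (hcount p n : ℚ) / (n.factorial : ℚ) = PowerSeries.coeff n (AHexp p) := by
  induction n using Nat.strong_induction_on with
  | _ n ih =>
    cases n with
    | zero =>
      rw [AH.hcount_zero, AH.coeff_AHexp_zero]
      norm_num
    | succ N =>
      have hrec := AH.AHexp_rec p N
      have hcomb := AH.hcount_succ hp N
      have hfact : ∀ j, j ≤ N →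
          (N.descFactorial j : ℚ) * (hcount p (N - j) : ℚ) / (N.factorial : ℚ)
            = (hcount p (N-j) : ℚ) / ((N-j).factorial : ℚ) := by
        intro j hj
        have hNf : ((N-j).factorial : ℚ) * (N.descFactorial j : ℚ) = (N.factorial : ℚ) := by
          rw [← Nat.cast_mul, Nat.factorial_mul_descFactorial hj]
        have h1 : ((N-j).factorial : ℚ) ≠ 0 := by positivity
        have h2 : ((N.factorial : ℚ)) ≠ 0 := by positivity
        field_simp
        linear_combination (hcount p (N-j) : ℚ) * hNf
      have hcombQ : (hcount p (N+1) : ℚ) = ∑ j ∈ Finset.range (N+1),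
          (if ∃ k, j + 1 = p ^ k
            then (N.descFactorial j : ℚ) * (hcount p (N - j) : ℚ) else 0) := by
        rw [hcomb]
        push_cast [apply_ite (Nat.cast : ℕ → ℚ)]
        rfl
      have key : (hcount p (N+1) : ℚ) / (N.factorial : ℚ) =
          ∑ i ∈ Finset.range (N+1),
            (if ∃ k, (N - i) + 1 = p ^ k
              then (hcount p i : ℚ) / (i.factorial : ℚ) else 0) := by
        rw [hcombQ, Finset.sum_div, ← Finset.sum_range_reflect]
        apply Finset.sum_congr rfl
        intro i hi
        rw [Finset.mem_range] at hi
        have hNN : N + 1 - 1 - i = N - i := by omega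
        rw [hNN]
        split_ifs with h
        · rw [hfact (N-i) (by omega), show N - (N - i) = i from by omega]
        · rw [zero_div]
      have hstep : ((N:ℚ)+1) * ((hcount p (N+1) : ℚ) / ((N+1).factorial : ℚ)) =
          (hcount p (N+1) : ℚ) / (N.factorial : ℚ) := by
        rw [Nat.factorial_succ]
        have h1 : ((N:ℚ)+1) ≠ 0 := by positivity
        have h2 : ((N.factorial : ℚ)) ≠ 0 := by positivity
        push_cast
        field_simp
      have hNe : ((N:ℚ)+1) ≠ 0 := by positivity
      apply mul_left_cancel₀ hNe
      rw [hstep, key, hrec]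
      apply Finset.sum_congr rfl
      intro i hi
      rw [Finset.mem_range] at hi
      split_ifs with h
      · exact ih i (by omega)
      · rfl
end

section
/- Let p be a prime and h_n the number of elements of p-power order in S_n. For any ℓ ≥ 1, det_{1≤i,j≤ℓ} ( binom(pi, j) · h_{pi - j} ) = det_{1≤i,j≤ℓ} ( binom(pi, j) ). -/
open Equiv Finset


/-- number of fixed-point-free elements of `p`-power order in `S_n`. -/
noncomputable def dcount (p n : ℕ) : ℕ :=
  Nat.card {σ : Equiv.Perm (Fin n) // (∃ k, orderOf σ = p ^ k) ∧ ∀ x, σ x ≠ x}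

lemma ofSubtype_injective {α : Type*} {pr : α → Prop} [DecidablePred pr] :
    Function.Injective (Equiv.Perm.ofSubtype : Equiv.Perm (Subtype pr) →* Equiv.Perm α) := by
  intro f g h
  ext x
  have := congrArg (fun (σ : Equiv.Perm α) => σ (x : α)) h
  simpa [Equiv.Perm.ofSubtype_apply_coe, Subtype.ext_iff] using this

/-- `permCongr` as a `MulEquiv`. -/
def permCongrMul {α β : Type*} (e : α ≃ β) : Equiv.Perm α ≃* Equiv.Perm β :=
  { e.permCongr with
    map_mul' := fun x y => by
      ext b
      simp [Equiv.permCongr_apply, Equiv.Perm.mul_apply] }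

lemma permCongrMul_apply {α β : Type*} (e : α ≃ β) (σ : Equiv.Perm α) (b : β) :
    permCongrMul e σ b = e (σ (e.symm b)) := rfl

lemma permCongrMul_fpf {α β : Type*} (e : α ≃ β) (σ : Equiv.Perm α) :
    (∀ y, permCongrMul e σ y ≠ y) ↔ (∀ x, σ x ≠ x) := by
  constructor
  · intro h x hx
    exact h (e x) (by simp [permCongrMul_apply, hx])
  · intro h y hy
    rw [permCongrMul_apply] at hy
    apply_fun e.symm at hy
    rw [Equiv.symm_apply_apply] at hy
    exact h _ hy

/-- transport the (p-power order & fixed-point free) subtype along a relabelling -/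
def dEquiv {α β : Type*} (p : ℕ) (e : α ≃ β) :
    {σ : Equiv.Perm α // (∃ k, orderOf σ = p ^ k) ∧ ∀ x, σ x ≠ x} ≃
    {σ : Equiv.Perm β // (∃ k, orderOf σ = p ^ k) ∧ ∀ x, σ x ≠ x} :=
  (permCongrMul e).toEquiv.subtypeEquiv (by
    intro σ
    have h1 : orderOf ((permCongrMul e).toEquiv σ) = orderOf σ := by
      rw [MulEquiv.toEquiv_eq_coe, EquivLike.coe_coe, (permCongrMul e).orderOf_eq]
    have h2 : (∀ y, ((permCongrMul e).toEquiv σ) y ≠ y) ↔ (∀ x, σ x ≠ x) :=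
      permCongrMul_fpf e σ
    rw [h1, and_congr_right_iff]
    exact fun _ => h2.symm)

lemma dcount_card {α : Type*} [Fintype α] [DecidableEq α] (p : ℕ) :
    Nat.card {σ : Equiv.Perm α // (∃ k, orderOf σ = p ^ k) ∧ ∀ x, σ x ≠ x}
      = dcount p (Fintype.card α) := by
  exact Nat.card_congr (dEquiv p (Fintype.equivFin α))

lemma support_mem_iff {n : ℕ} {σ : Equiv.Perm (Fin n)} {S : Finset (Fin n)}
    (hs : σ.support = S) (x : Fin n) : σ x ∈ S ↔ x ∈ S := by
  subst hs; exact Equiv.Perm.apply_mem_support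

open Equiv.Perm in
/-- Permutations with support exactly `S` and `p`-power order correspond to
fixed-point-free `p`-power permutations of `S`. -/
def fiberEquiv {n : ℕ} (p : ℕ) (S : Finset (Fin n)) :
    {τ : Equiv.Perm {x : Fin n // x ∈ S} // (∃ k, orderOf τ = p ^ k) ∧ ∀ x, τ x ≠ x} ≃
    {σ : Equiv.Perm (Fin n) // (∃ k, orderOf σ = p ^ k) ∧ σ.support = S} where
  toFun τ := ⟨Equiv.Perm.ofSubtype τ.1, by
    obtain ⟨τ, ⟨k, hk⟩, hf⟩ := τ
    refine ⟨⟨k, by rwa [orderOf_injective _ _root_.ofSubtype_injective]⟩, ?_⟩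
    ext a
    rw [Equiv.Perm.mem_support]
    by_cases ha : a ∈ S
    · simp only [ha, iff_true]
      rw [Equiv.Perm.ofSubtype_apply_of_mem τ ha]
      intro h
      exact hf ⟨a, ha⟩ (Subtype.ext h)
    · simp only [ha, iff_false, not_not]
      exact Equiv.Perm.ofSubtype_apply_of_not_mem τ ha⟩
  invFun σ := ⟨σ.1.subtypePerm (support_mem_iff σ.2.2), by
    obtain ⟨σ, ⟨k, hk⟩, hs⟩ := σ
    simp only
    have hext : Equiv.Perm.ofSubtype (σ.subtypePerm (support_mem_iff hs)) = σ := by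
      apply Equiv.Perm.ofSubtype_subtypePerm
      intro x hx
      rw [← hs, Equiv.Perm.mem_support]
      exact hx
    constructor
    · exact ⟨k, by rw [← orderOf_injective _ _root_.ofSubtype_injective, hext, hk]⟩
    · rintro ⟨x, hx⟩ h
      rw [Subtype.ext_iff, Equiv.Perm.subtypePerm_apply] at h
      rw [← hs, Equiv.Perm.mem_support] at hx
      exact hx h⟩
  left_inv τ := by
    apply Subtype.ext
    exact Equiv.Perm.subtypePerm_ofSubtype τ.1
  right_inv σ := by
    apply Subtype.ext
    show Equiv.Perm.ofSubtype (σ.1.subtypePerm (support_mem_iff σ.2.2)) = σ.1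
    refine Equiv.Perm.ofSubtype_subtypePerm _ ?_
    intro x hx
    exact σ.2.2 ▸ Equiv.Perm.mem_support.mpr hx

lemma hcount_eq_sum (p n : ℕ) :
    hcount p n = ∑ s ∈ Finset.range (n + 1), n.choose s * dcount p s := by
  classical
  have hfib : ∀ S : Finset (Fin n),
      Nat.card {σ : Equiv.Perm (Fin n) // (∃ k, orderOf σ = p ^ k) ∧ σ.support = S}
        = dcount p S.card := by
    intro S
    rw [← Nat.card_congr (fiberEquiv p S), dcount_card p, Fintype.card_coe]
  have e : {σ : Equiv.Perm (Fin n) // ∃ k, orderOf σ = p ^ k} ≃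
      Σ S : Finset (Fin n),
        {σ : Equiv.Perm (Fin n) // (∃ k, orderOf σ = p ^ k) ∧ σ.support = S} := by
    refine ((Equiv.sigmaFiberEquiv
      (fun x : {σ : Equiv.Perm (Fin n) // ∃ k, orderOf σ = p ^ k} => x.1.support)).symm).trans ?_
    exact Equiv.sigmaCongrRight (fun S => Equiv.subtypeSubtypeEquivSubtypeInter
      (fun σ : Equiv.Perm (Fin n) => ∃ k, orderOf σ = p ^ k) (fun σ => σ.support = S))
  rw [hcount, Nat.card_congr e, Nat.card_eq_fintype_card, Fintype.card_sigma]
  have hconv : ∀ S : Finset (Fin n),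
      Fintype.card {σ : Equiv.Perm (Fin n) // (∃ k, orderOf σ = p ^ k) ∧ σ.support = S}
        = dcount p S.card := fun S => by rw [← Nat.card_eq_fintype_card, hfib S]
  rw [Finset.sum_congr rfl (fun S _ => hconv S), ← Finset.powerset_univ,
    Finset.sum_powerset_apply_card (dcount p)]
  simp [Finset.card_fin]

lemma dcount_zero (p : ℕ) : dcount p 0 = 1 := by
  have : Unique {σ : Equiv.Perm (Fin 0) // (∃ k, orderOf σ = p ^ k) ∧ ∀ x, σ x ≠ x} := by
    refine ⟨⟨⟨1, ⟨0, by simp⟩, fun x => x.elim0⟩⟩, ?_⟩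
    intro x
    exact Subtype.ext (Subsingleton.elim _ _)
  exact Nat.card_unique

lemma dcount_eq_zero (p : ℕ) (hp : p.Prime) {s : ℕ} (h : ¬ p ∣ s) : dcount p s = 0 := by
  have : IsEmpty {σ : Equiv.Perm (Fin s) // (∃ k, orderOf σ = p ^ k) ∧ ∀ x, σ x ≠ x} := by
    constructor
    rintro ⟨σ, ⟨k, hk⟩, hf⟩
    apply h
    have hsupp : σ.support = Finset.univ := by
      ext x
      simp [Equiv.Perm.mem_support, hf x]
    have hsum : σ.cycleType.sum = s := by
      rw [Equiv.Perm.sum_cycleType, hsupp, Finset.card_univ, Fintype.card_fin]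
    rw [← hsum]
    apply Multiset.dvd_sum
    intro c hc
    have hdvd : c ∣ p ^ k := by
      rw [← hk, ← Equiv.Perm.lcm_cycleType]
      exact Multiset.dvd_lcm hc
    obtain ⟨j, hj, rfl⟩ := (Nat.dvd_prime_pow hp).mp hdvd
    have h2 : 2 ≤ p ^ j := Equiv.Perm.two_le_of_mem_cycleType hc
    have hj0 : j ≠ 0 := by
      rintro rfl
      simp at h2
    exact dvd_pow_self p hj0
  simp [dcount, Nat.card_of_isEmpty]

lemma tri (n J s : ℕ) : n.choose J * (n - J).choose s = n.choose s * (n - s).choose J := by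
  by_cases h : J + s ≤ n
  · have h1 := Nat.choose_mul (n := n) (k := J + s) (s := s) (Nat.le_add_left _ _)
    have h2 := Nat.choose_mul (n := n) (k := J + s) (s := J) (Nat.le_add_right _ _)
    rw [Nat.add_sub_cancel] at h1
    rw [Nat.add_sub_cancel_left] at h2
    have hsym : (J + s).choose s = (J + s).choose J := by
      rw [← Nat.choose_symm (Nat.le_add_right _ _)]
      congr 1
      omega
    rw [← h2, ← h1, hsym]
  · push_neg at h
    have hz : ∀ a b : ℕ, n < a + b → n.choose a * (n - a).choose b = 0 := by
      intro a b hab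
      rcases le_or_gt a n with ha | ha
      · have : n - a < b := by omega
        rw [Nat.choose_eq_zero_of_lt this, Nat.mul_zero]
      · rw [Nat.choose_eq_zero_of_lt ha, Nat.zero_mul]
    rw [hz J s h, hz s J (by omega)]

lemma stepA (p : ℕ) (hp : p.Prime) (n J : ℕ) (hJ : 1 ≤ J) :
    n.choose J * hcount p (n - J)
      = ∑ s ∈ Finset.range (n + 1), n.choose s * dcount p s * (n - s).choose J := by
  rcases le_or_gt J n with hJn | hJn
  · rw [hcount_eq_sum, Finset.mul_sum]
    have hsub : Finset.range (n - J + 1) ⊆ Finset.range (n + 1) := by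
      apply Finset.range_subset_range.mpr; omega
    rw [← Finset.sum_subset hsub]
    · apply Finset.sum_congr rfl
      intro s hs
      rw [Finset.mem_range] at hs
      rw [← Nat.mul_assoc, tri n J s]
      ring
    · intro s hs hns
      rw [Finset.mem_range] at hs hns
      have : n - s < J := by omega
      rw [Nat.choose_eq_zero_of_lt this, Nat.mul_zero]
  · rw [Nat.choose_eq_zero_of_lt hJn, Nat.zero_mul]
    symm
    apply Finset.sum_eq_zero
    intro s hs
    have : n - s < J := by omega
    rw [Nat.choose_eq_zero_of_lt this, Nat.mul_zero]

lemma entry (p : ℕ) (hp : p.Prime) (I J ℓ : ℕ) (hI : 1 ≤ I) (hJ : 1 ≤ J) (hIℓ : I ≤ ℓ) :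
    (p * I).choose J * hcount p (p * I - J)
      = ∑ m ∈ Finset.range ℓ,
          (p * I).choose (p * (m + 1)) * dcount p (p * (I - 1 - m))
            * (p * (m + 1)).choose J := by
  have hp1 : 1 ≤ p := hp.one_lt.le.trans' (by omega)
  set n := p * I with hn
  rw [stepA p hp n J hJ]
  -- restrict to multiples of p
  have hres : ∑ s ∈ Finset.range (n + 1), n.choose s * dcount p s * (n - s).choose J
      = ∑ m ∈ Finset.range (I + 1),
          n.choose (p * m) * dcount p (p * m) * (n - p * m).choose J := by
    rw [← Finset.sum_filter_of_ne (p := fun s => p ∣ s)]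
    · symm
      apply Finset.sum_nbij' (i := fun m => p * m) (j := fun s => s / p)
      · intro m hm
        simp only [Finset.mem_filter, Finset.mem_range] at *
        constructor
        · have : p * m ≤ p * I := Nat.mul_le_mul_left p (by omega)
          omega
        · exact Dvd.intro m rfl
      · intro s hs
        simp only [Finset.mem_filter, Finset.mem_range] at *
        obtain ⟨hs1, c, rfl⟩ := hs
        rw [Nat.mul_div_cancel_left c (by omega)]
        have : c ≤ I := Nat.le_of_mul_le_mul_left (show p * c ≤ p * I by omega) (show 0 < p by omega)
        omega
      · intro m hm
        exact Nat.mul_div_cancel_left m (by omega)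
      · intro s hs
        simp only [Finset.mem_filter, Finset.mem_range] at hs
        exact Nat.mul_div_cancel' hs.2
      · intro m hm
        rfl
    · intro s hs hne
      by_contra hdvd
      rw [dcount_eq_zero p hp hdvd] at hne
      simp at hne
  rw [hres]
  -- reflect
  have hrefl : ∑ m ∈ Finset.range (I + 1),
      n.choose (p * m) * dcount p (p * m) * (n - p * m).choose J
    = ∑ m ∈ Finset.range (I + 1),
        n.choose (p * m) * dcount p (p * (I - m)) * (p * m).choose J := by
    rw [← Finset.sum_range_reflect]
    apply Finset.sum_congr rfl
    intro m hm
    rw [Finset.mem_range] at hm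
    have hm' : m ≤ I := by omega
    have h1 : I + 1 - 1 - m = I - m := by omega
    rw [h1]
    have hle : p * m ≤ p * I := Nat.mul_le_mul_left p hm'
    have h2 : n - p * (I - m) = p * m := by
      rw [hn, Nat.mul_sub]
      omega
    have h3 : n - p * m = p * (I - m) := by
      rw [hn, Nat.mul_sub]
    have h4 : n.choose (p * (I - m)) = n.choose (p * m) := by
      rw [← h3]
      exact Nat.choose_symm (by rw [hn]; exact hle)
    rw [h2, h4]
  rw [hrefl, Finset.sum_range_succ']
  -- the m = 0 term vanishes
  rw [Nat.mul_zero, Nat.choose_eq_zero_of_lt (by omega : (0:ℕ) < J), Nat.mul_zero, Nat.add_zero]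
  -- extend range from I to ℓ
  have hsub : Finset.range I ⊆ Finset.range ℓ := Finset.range_subset_range.mpr hIℓ
  rw [Finset.sum_subset hsub]
  · apply Finset.sum_congr rfl
    intro m hm
    have he : I - (m + 1) = I - 1 - m := by omega
    rw [he]
  · intro m hm hnm
    rw [Finset.mem_range] at hm hnm
    have h0 : p * I ≤ p * m := Nat.mul_le_mul_left p (by omega)
    have h1 : p * (m + 1) = p * m + p := by ring
    have : n < p * (m + 1) := by rw [hn]; omega
    rw [Nat.choose_eq_zero_of_lt this, Nat.zero_mul, Nat.zero_mul]

theorem det_choose_hcount_eq_det_choose (p : ℕ) (hp : p.Prime) (ℓ : ℕ) (hℓ : 1 ≤ ℓ) :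
    Matrix.det (Matrix.of fun i j : Fin ℓ =>
        ((Nat.choose (p * (i + 1)) (j + 1) * hcount p (p * (i + 1) - (j + 1)) : ℕ) : ℤ))
      = Matrix.det (Matrix.of fun i j : Fin ℓ =>
        ((Nat.choose (p * (i + 1)) (j + 1) : ℕ) : ℤ)) := by
  set B : Matrix (Fin ℓ) (Fin ℓ) ℤ := Matrix.of fun i j : Fin ℓ =>
    ((Nat.choose (p * (i + 1)) (j + 1) : ℕ) : ℤ) with hB
  set C : Matrix (Fin ℓ) (Fin ℓ) ℤ := Matrix.of fun i m : Fin ℓ =>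
    ((Nat.choose (p * (i + 1)) (p * (m + 1)) * dcount p (p * ((i : ℕ) - (m : ℕ))) : ℕ) : ℤ)
    with hC
  have hAB : (Matrix.of fun i j : Fin ℓ =>
      ((Nat.choose (p * (i + 1)) (j + 1) * hcount p (p * (i + 1) - (j + 1)) : ℕ) : ℤ))
      = C * B := by
    ext i j
    rw [Matrix.mul_apply]
    simp only [hB, hC, Matrix.of_apply]
    have he := entry p hp (i + 1) (j + 1) ℓ (by omega) (by omega) (by omega : (i : ℕ) + 1 ≤ ℓ)
    simp only [Nat.add_sub_cancel] at he
    rw [Fin.sum_univ_eq_sum_range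
      (fun m => ((Nat.choose (p * ((i : ℕ) + 1)) (p * (m + 1))
          * dcount p (p * ((i : ℕ) - m)) : ℕ) : ℤ)
        * ((Nat.choose (p * (m + 1)) ((j : ℕ) + 1) : ℕ) : ℤ)) ℓ]
    exact_mod_cast congrArg (Nat.cast : ℕ → ℤ) he
  rw [hAB, Matrix.det_mul]
  have hCdet : C.det = 1 := by
    rw [Matrix.det_of_lowerTriangular C]
    · apply Finset.prod_eq_one
      intro i _
      simp only [hC, Matrix.of_apply]
      rw [Nat.sub_self, Nat.mul_zero, dcount_zero, Nat.choose_self]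
      norm_num
    · intro i j hij
      simp only [OrderDual.toDual_lt_toDual] at hij
      have hij' : (i : ℕ) < (j : ℕ) := hij
      simp only [hC, Matrix.of_apply]
      have : p * ((i : ℕ) + 1) < p * ((j : ℕ) + 1) :=
        (Nat.mul_lt_mul_left hp.pos).mpr (by omega)
      rw [Nat.choose_eq_zero_of_lt this, Nat.zero_mul, Nat.cast_zero]
  rw [hCdet, one_mul]
end

section
/- Let p be a prime. For any ℓ ≥ 1, the determinant of the ℓ×ℓ matrix with (i,j) entry binom(pi, j) equals p^{ℓ(ℓ+1)/2}. -/
open Finset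

private def fwd (f : ℕ → ℤ) : ℕ → ℤ := fun n => f (n + 1) - f n

private def FF (p j : ℕ) : ℕ → ℤ := fun i => (Nat.choose (p * i) j : ℤ)

private lemma newton : ∀ (i : ℕ) (f : ℕ → ℤ),
    ∑ k ∈ range (i + 1), (Nat.choose i k : ℤ) * (fwd^[k] f 0) = f i := by
  intro i
  induction i with
  | zero => intro f; simp
  | succ i ih =>
    intro f
    rw [Finset.sum_range_succ']
    have h1 : ∀ k, ((i + 1).choose (k + 1) : ℤ) = (i.choose k : ℤ) + (i.choose (k + 1) : ℤ) := by
      intro k; rw [Nat.choose_succ_succ]; push_cast; ring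
    have hsplit : ∑ k ∈ range (i + 1), ((i + 1).choose (k + 1) : ℤ) * fwd^[k + 1] f 0
        = ∑ k ∈ range (i + 1), (i.choose k : ℤ) * fwd^[k + 1] f 0
          + ∑ k ∈ range (i + 1), (i.choose (k + 1) : ℤ) * fwd^[k + 1] f 0 := by
      rw [← Finset.sum_add_distrib]
      refine Finset.sum_congr rfl fun k _ => ?_
      rw [h1]; ring
    have hA : ∑ k ∈ range (i + 1), (i.choose k : ℤ) * fwd^[k + 1] f 0
        = f (i + 1) - f i := by
      have := ih (fwd f)
      simp only [Function.iterate_succ_apply]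
      rw [this]; rfl
    have hB : ∑ k ∈ range (i + 1), (i.choose (k + 1) : ℤ) * fwd^[k + 1] f 0
          + ((i + 1).choose 0 : ℤ) * fwd^[0] f 0
        = f i := by
      have h2 : ∑ k ∈ range (i + 2), (i.choose k : ℤ) * fwd^[k] f 0
          = ∑ k ∈ range (i + 1), (i.choose (k + 1) : ℤ) * fwd^[k + 1] f 0
            + ((i + 1).choose 0 : ℤ) * fwd^[0] f 0 := by
        rw [Finset.sum_range_succ']; simp
      rw [← h2, Finset.sum_range_succ, Nat.choose_succ_self, ih f]
      simp
    rw [hsplit]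
    linarith [hA, hB]

private lemma fwd_FF (p j : ℕ) : fwd (FF p (j + 1)) =
    fun i => ∑ t ∈ range (j + 1), (p.choose (t + 1) : ℤ) * FF p (j - t) i := by
  funext i
  show ((p * (i + 1)).choose (j + 1) : ℤ) - ((p * i).choose (j + 1) : ℤ) = _
  have hv : (p * (i + 1)).choose (j + 1)
      = ∑ ij ∈ Finset.HasAntidiagonal.antidiagonal (j + 1), p.choose ij.1 * (p * i).choose ij.2 := by
    rw [mul_add, mul_one, add_comm, Nat.add_choose_eq]
  rw [hv, Finset.Nat.sum_antidiagonal_eq_sum_range_succ_mk, Finset.sum_range_succ']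
  push_cast
  simp only [Nat.sub_zero, Nat.choose_zero_right, Nat.cast_one, mul_one]
  rw [one_mul, add_sub_cancel_right]
  simp [FF]

private lemma fwd_iter_sum (k : ℕ) (s : Finset ℕ) (c : ℕ → ℤ) (g : ℕ → ℕ → ℤ) :
    fwd^[k] (fun i => ∑ t ∈ s, c t * g t i) =
      fun i => ∑ t ∈ s, c t * fwd^[k] (g t) i := by
  induction k generalizing g with
  | zero => simp
  | succ k ih =>
    rw [Function.iterate_succ_apply]
    have : fwd (fun i => ∑ t ∈ s, c t * g t i)
        = fun i => ∑ t ∈ s, c t * fwd (g t) i := by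
      funext i
      show (∑ t ∈ s, c t * g t (i + 1)) - ∑ t ∈ s, c t * g t i = _
      rw [← Finset.sum_sub_distrib]
      refine Finset.sum_congr rfl fun t _ => ?_
      show c t * g t (i+1) - c t * g t i = c t * (g t (i+1) - g t i)
      ring
    rw [this, ih]
    simp only [Function.iterate_succ_apply]

private lemma fwd_iter_zero (k : ℕ) : fwd^[k] (fun _ => (0:ℤ)) = fun _ => 0 := by
  induction k with
  | zero => rfl
  | succ k ih =>
    rw [Function.iterate_succ_apply]
    have h : fwd (fun _ => (0:ℤ)) = fun _ => 0 := by funext n; simp [fwd]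
    rw [h, ih]

private lemma fwd_vanish (p : ℕ) : ∀ k j, j < k → ∀ i, fwd^[k] (FF p j) i = 0 := by
  intro k
  induction k with
  | zero => omega
  | succ k ih =>
    intro j hj i
    rw [Function.iterate_succ_apply]
    match j with
    | 0 =>
      have h : fwd (FF p 0) = fun _ => 0 := by funext n; simp [fwd, FF]
      rw [h, fwd_iter_zero]
    | m + 1 =>
      rw [fwd_FF p m, fwd_iter_sum]
      refine Finset.sum_eq_zero fun t ht => ?_
      rw [ih (m - t) (by omega) i]
      ring

private lemma sum_aux (n : ℕ) : ∑ k ∈ Finset.range n, (k + 1) = n * (n + 1) / 2 := by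
  have h := Finset.sum_range_id_mul_two (n + 1)
  rw [Finset.sum_range_succ'] at h
  simp only [add_zero] at h
  have h2 : (n + 1) * (n + 1 - 1) = n * (n + 1) := by
    simp [Nat.mul_comm]
  omega

private lemma fwd_diag (p : ℕ) : ∀ j, fwd^[j] (FF p j) 0 = (p : ℤ) ^ j := by
  intro j
  induction j with
  | zero => simp [FF]
  | succ j ih =>
    rw [Function.iterate_succ_apply, fwd_FF p j, fwd_iter_sum]
    show ∑ t ∈ range (j + 1), (p.choose (t + 1) : ℤ) * fwd^[j] (FF p (j - t)) 0 = (p:ℤ) ^ (j+1)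
    rw [Finset.sum_eq_single 0]
    · simp only [Nat.sub_zero, zero_add, Nat.choose_one_right, ih]
      push_cast; ring
    · intro t ht htne
      rw [fwd_vanish p j (j - t) (by simp at ht; omega) 0]
      ring
    · intro h; simp at h

theorem det_choose (p : ℕ) (hp : p.Prime) (ℓ : ℕ) (hℓ : 1 ≤ ℓ) :
    Matrix.det (Matrix.of fun i j : Fin ℓ =>
        ((Nat.choose (p * (i + 1)) (j + 1) : ℕ) : ℤ))
      = (p : ℤ) ^ (ℓ * (ℓ + 1) / 2) := by
  classical
  have hM : (Matrix.of fun i j : Fin ℓ =>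
        ((Nat.choose (p * (i + 1)) (j + 1) : ℕ) : ℤ))
      = (Matrix.of fun i k : Fin ℓ => (((i:ℕ) + 1).choose ((k:ℕ) + 1) : ℤ)) *
        (Matrix.of fun k j : Fin ℓ => fwd^[(k:ℕ) + 1] (FF p ((j:ℕ) + 1)) 0) := by
    ext i j
    simp only [Matrix.mul_apply, Matrix.of_apply]
    rw [Fin.sum_univ_eq_sum_range
      (fun k => ((((i:ℕ) + 1).choose (k + 1) : ℕ) : ℤ) * fwd^[k + 1] (FF p ((j:ℕ) + 1)) 0) ℓ]
    have key := newton ((i:ℕ) + 1) (FF p ((j:ℕ) + 1))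
    rw [Finset.sum_range_succ'] at key
    have h0 : fwd^[0] (FF p ((j:ℕ) + 1)) 0 = 0 := by simp [FF]
    rw [h0, mul_zero, add_zero] at key
    have hext : ∑ k ∈ Finset.range ℓ,
          ((((i:ℕ) + 1).choose (k + 1) : ℕ) : ℤ) * fwd^[k + 1] (FF p ((j:ℕ) + 1)) 0
        = ∑ k ∈ Finset.range ((i:ℕ) + 1),
          ((((i:ℕ) + 1).choose (k + 1) : ℕ) : ℤ) * fwd^[k + 1] (FF p ((j:ℕ) + 1)) 0 := by
      refine (Finset.sum_subset (Finset.range_subset_range.mpr i.2) ?_).symm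
      intro k _ hk
      simp only [Finset.mem_range, not_lt] at hk
      rw [Nat.choose_eq_zero_of_lt (by omega)]
      push_cast; ring
    rw [hext, key]
    rfl
  rw [hM, Matrix.det_mul]
  have hA : (Matrix.of fun i k : Fin ℓ => (((i:ℕ) + 1).choose ((k:ℕ) + 1) : ℤ)).det = 1 := by
    rw [Matrix.det_of_lowerTriangular]
    · simp
    · intro i k hik
      simp only [Matrix.of_apply]
      rw [Nat.choose_eq_zero_of_lt (by exact_mod_cast Nat.add_lt_add_right hik 1)]
      simp
  have hC : (Matrix.of fun k j : Fin ℓ => fwd^[(k:ℕ) + 1] (FF p ((j:ℕ) + 1)) 0).det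
      = (p : ℤ) ^ (ℓ * (ℓ + 1) / 2) := by
    rw [Matrix.det_of_upperTriangular]
    · have hdiag : ∀ k : Fin ℓ, (Matrix.of fun k j : Fin ℓ =>
          fwd^[(k:ℕ) + 1] (FF p ((j:ℕ) + 1)) 0) k k = (p : ℤ) ^ ((k:ℕ) + 1) := by
        intro k
        simp only [Matrix.of_apply]
        exact fwd_diag p ((k:ℕ) + 1)
      rw [Finset.prod_congr rfl fun k _ => hdiag k, Finset.prod_pow_eq_pow_sum]
      congr 1
      rw [Fin.sum_univ_eq_sum_range (fun k => k + 1) ℓ]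
      exact sum_aux ℓ
    · intro k j hjk
      simp only [Matrix.of_apply]
      exact fwd_vanish p ((k:ℕ) + 1) ((j:ℕ) + 1) (by exact_mod_cast Nat.add_lt_add_right hjk 1) 0
  rw [hA, hC, one_mul]
end

section
/- Let p ≥ 1 and let T_n be the set of constrained staircase tableaux of shape (n, …, 1) as above. Define F, L : T_n → T_{n-1} by removing the first (resp. last) cell of each row, and define the gluing map G(S, T, u) which prepends the first column of S to T and appends u at the bottom of the new first column. Then G is a bijection between n-admissible triples (S, T, u) with F(S) = L(T) and the set T_n. -/
/-- The set of staircase Young tableaux of shape `(n, n-1, …, 1)` (rows and columns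
indexed from 1; row `i` has cells `j` with `i + j ≤ n + 1`) with positive integer
entries satisfying `1 ≤ T i j ≤ p + ∑_{k=1}^{i-1} (T k (j+1) - T k j)` in every cell.
Entries outside the shape are normalized to `0`. -/
def Staircase (p n : ℕ) : Set (ℕ → ℕ → ℤ) :=
  {T | (∀ i j, 1 ≤ i → 1 ≤ j → i + j ≤ n + 1 →
          1 ≤ T i j ∧ T i j ≤ p + ∑ k ∈ Finset.Icc 1 (i - 1), (T k (j + 1) - T k j)) ∧
       (∀ i j, ¬(1 ≤ i ∧ 1 ≤ j ∧ i + j ≤ n + 1) → T i j = 0)}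

/-- The set of `n`-admissible triples `(S, T, u)`. -/
def AdmissibleTriples (p n : ℕ) : Set ((ℕ → ℕ → ℤ) × (ℕ → ℕ → ℤ) × ℤ) :=
  {x | x.1 ∈ Staircase p (n - 1) ∧ x.2.1 ∈ Staircase p (n - 1) ∧
       1 ≤ x.2.2 ∧ x.2.2 ≤ p + ∑ k ∈ Finset.Icc 1 (n - 1), (x.2.1 k 1 - x.1 k 1)}

/-- `F` truncates the first block of each row, producing a tableau of shape `(n-1, …, 1)`
(values outside the smaller shape are normalized to `0`). -/
def Ftrunc (n : ℕ) (T : ℕ → ℕ → ℤ) : ℕ → ℕ → ℤ :=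
  fun i j => if 1 ≤ i ∧ 1 ≤ j ∧ i + j ≤ n then T i (j + 1) else 0

/-- `L` truncates the last block of each row, producing a tableau of shape `(n-1, …, 1)`. -/
def Ltrunc (n : ℕ) (T : ℕ → ℕ → ℤ) : ℕ → ℕ → ℤ :=
  fun i j => if 1 ≤ i ∧ 1 ≤ j ∧ i + j ≤ n then T i j else 0

/-- The gluing map `G`: prepend the first column of `S` to the left of `T` and append
`u` at the bottom of the new first column, producing a tableau of shape `(n, …, 1)`. -/
def Glue (n : ℕ) (S T : ℕ → ℕ → ℤ) (u : ℤ) : ℕ → ℕ → ℤ :=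
  fun i j =>
    if 1 ≤ i ∧ 1 ≤ j ∧ i + j ≤ n + 1 then
      (if j = 1 then (if i = n then u else S i 1) else T i (j - 1))
    else 0

section aux

variable {n : ℕ} {S T : ℕ → ℕ → ℤ} {u : ℤ}

lemma glue_eval_col1 {i : ℕ} (h1 : 1 ≤ i) (h2 : i < n) : Glue n S T u i 1 = S i 1 := by
  simp only [Glue]
  rw [if_pos ⟨h1, le_refl 1, by omega⟩]
  simp [show i ≠ n from by omega]

lemma glue_eval_u (hn : 1 ≤ n) : Glue n S T u n 1 = u := by
  simp only [Glue]
  rw [if_pos ⟨hn, le_refl 1, by omega⟩]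
  simp

lemma glue_eval_rest {i j : ℕ} (h1 : 1 ≤ i) (h2 : 2 ≤ j) (h3 : i + j ≤ n + 1) :
    Glue n S T u i j = T i (j - 1) := by
  simp only [Glue]
  rw [if_pos ⟨h1, by omega, h3⟩, if_neg (by omega)]

lemma glue_eval_out {i j : ℕ} (h : ¬(1 ≤ i ∧ 1 ≤ j ∧ i + j ≤ n + 1)) :
    Glue n S T u i j = 0 := if_neg h

end aux

theorem glue_bijOn (p : ℕ) (hp : 1 ≤ p) (n : ℕ) (hn : 1 ≤ n) :
    Set.BijOn (fun x : (ℕ → ℕ → ℤ) × (ℕ → ℕ → ℤ) × ℤ => Glue n x.1 x.2.1 x.2.2)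
      {x ∈ AdmissibleTriples p n | Ftrunc (n - 1) x.1 = Ltrunc (n - 1) x.2.1}
      (Staircase p n) := by
  have hn1 : n - 1 + 1 = n := Nat.sub_add_cancel hn
  apply Set.InvOn.bijOn (f' := fun U => (Ltrunc n U, Ftrunc n U, U n 1))
  · constructor
    · -- LeftInvOn: g (f x) = x on the domain
      rintro ⟨S, T, u⟩ ⟨⟨⟨hS1, hS0⟩, ⟨hT1, hT0⟩, hu1, hu2⟩, hFL⟩
      have hST : ∀ i j, 1 ≤ i → 1 ≤ j → i + j ≤ n - 1 → S i (j + 1) = T i j := by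
        intro i j hi hj hij
        have := congrFun (congrFun hFL i) j
        simpa [Ftrunc, Ltrunc, hi, hj, hij] using this
      refine Prod.ext ?_ (Prod.ext ?_ ?_)
      · funext i j
        simp only [Ltrunc]
        by_cases h : 1 ≤ i ∧ 1 ≤ j ∧ i + j ≤ n
        · rw [if_pos h]
          by_cases hj1 : j = 1
          · subst hj1
            exact glue_eval_col1 h.1 (by omega)
          · rw [glue_eval_rest h.1 (by omega) (by omega)]
            have := hST i (j - 1) h.1 (by omega) (by omega)
            rw [show j - 1 + 1 = j from by omega] at this
            exact this.symm
        · rw [if_neg h]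
          exact (hS0 i j (by omega)).symm
      · funext i j
        simp only [Ftrunc]
        by_cases h : 1 ≤ i ∧ 1 ≤ j ∧ i + j ≤ n
        · rw [if_pos h, glue_eval_rest h.1 (by omega) (by omega)]
          simp
        · rw [if_neg h]
          exact (hT0 i j (by omega)).symm
      · exact glue_eval_u hn
    · -- RightInvOn: f (g U) = U on Staircase p n
      rintro U ⟨hU1, hU0⟩
      dsimp only
      funext i j
      by_cases h : 1 ≤ i ∧ 1 ≤ j ∧ i + j ≤ n + 1
      · by_cases hj1 : j = 1
        · subst hj1
          by_cases hin : i = n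
          · subst hin; exact glue_eval_u hn
          · rw [glue_eval_col1 h.1 (by omega)]
            simp only [Ltrunc]
            rw [if_pos ⟨h.1, le_refl 1, by omega⟩]
        · rw [glue_eval_rest h.1 (by omega) h.2.2]
          simp only [Ftrunc]
          rw [if_pos ⟨h.1, by omega, by omega⟩, show j - 1 + 1 = j from by omega]
      · rw [glue_eval_out h]
        exact (hU0 i j h).symm
  · -- MapsTo f
    rintro ⟨S, T, u⟩ ⟨⟨⟨hS1, hS0⟩, ⟨hT1, hT0⟩, hu1, hu2⟩, hFL⟩
    have hST : ∀ i j, 1 ≤ i → 1 ≤ j → i + j ≤ n - 1 → S i (j + 1) = T i j := by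
      intro i j hi hj hij
      have := congrFun (congrFun hFL i) j
      simpa [Ftrunc, Ltrunc, hi, hj, hij] using this
    dsimp only
    constructor
    · intro i j hi hj hij
      by_cases hj1 : j = 1
      · subst hj1
        have hsum : ∑ k ∈ Finset.Icc 1 (i - 1), (Glue n S T u k (1 + 1) - Glue n S T u k 1)
            = ∑ k ∈ Finset.Icc 1 (i - 1), (T k 1 - S k 1) := by
          apply Finset.sum_congr rfl
          intro k hk
          simp only [Finset.mem_Icc] at hk
          rw [glue_eval_rest hk.1 (by omega) (by omega), glue_eval_col1 hk.1 (by omega)]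
        rw [hsum]
        by_cases hin : i = n
        · subst hin
          rw [glue_eval_u hn]
          exact ⟨hu1, hu2⟩
        · rw [glue_eval_col1 hi (by omega)]
          have hb := hS1 i 1 hi le_rfl (by omega)
          have hsum2 : ∑ k ∈ Finset.Icc 1 (i - 1), (S k (1 + 1) - S k 1)
              = ∑ k ∈ Finset.Icc 1 (i - 1), (T k 1 - S k 1) := by
            apply Finset.sum_congr rfl
            intro k hk
            simp only [Finset.mem_Icc] at hk
            rw [hST k 1 hk.1 le_rfl (by omega)]
          rw [hsum2] at hb
          exact hb
      · rw [glue_eval_rest hi (by omega) hij]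
        have hb := hT1 i (j - 1) hi (by omega) (by omega)
        rw [show j - 1 + 1 = j from by omega] at hb
        have hsum : ∑ k ∈ Finset.Icc 1 (i - 1), (Glue n S T u k (j + 1) - Glue n S T u k j)
            = ∑ k ∈ Finset.Icc 1 (i - 1), (T k j - T k (j - 1)) := by
          apply Finset.sum_congr rfl
          intro k hk
          simp only [Finset.mem_Icc] at hk
          rw [glue_eval_rest hk.1 (by omega) (by omega),
            glue_eval_rest hk.1 (by omega) (by omega)]
          simp
        rw [hsum]
        exact hb
    · intro i j h
      exact glue_eval_out h
  · -- MapsTo g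
    rintro U ⟨hU1, hU0⟩
    dsimp only
    refine ⟨⟨⟨?_, ?_⟩, ⟨?_, ?_⟩, ?_, ?_⟩, ?_⟩
    · intro i j hi hj hij
      dsimp only
      rw [hn1] at hij
      have key : ∀ a b, 1 ≤ a → 1 ≤ b → a + b ≤ n → Ltrunc n U a b = U a b := by
        intro a b ha hb hab
        simp only [Ltrunc]; rw [if_pos ⟨ha, hb, hab⟩]
      rw [key i j hi hj hij]
      have hsum : ∑ k ∈ Finset.Icc 1 (i - 1), (Ltrunc n U k (j + 1) - Ltrunc n U k j)
          = ∑ k ∈ Finset.Icc 1 (i - 1), (U k (j + 1) - U k j) := by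
        apply Finset.sum_congr rfl
        intro k hk
        simp only [Finset.mem_Icc] at hk
        rw [key k (j + 1) hk.1 (by omega) (by omega), key k j hk.1 hj (by omega)]
      rw [hsum]
      exact hU1 i j hi hj (by omega)
    · intro i j h
      rw [hn1] at h
      exact if_neg h
    · intro i j hi hj hij
      dsimp only
      rw [hn1] at hij
      have key : ∀ a b, 1 ≤ a → 1 ≤ b → a + b ≤ n → Ftrunc n U a b = U a (b + 1) := by
        intro a b ha hb hab
        simp only [Ftrunc]; rw [if_pos ⟨ha, hb, hab⟩]
      rw [key i j hi hj hij]
      have hsum : ∑ k ∈ Finset.Icc 1 (i - 1), (Ftrunc n U k (j + 1) - Ftrunc n U k j)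
          = ∑ k ∈ Finset.Icc 1 (i - 1), (U k (j + 1 + 1) - U k (j + 1)) := by
        apply Finset.sum_congr rfl
        intro k hk
        simp only [Finset.mem_Icc] at hk
        rw [key k (j + 1) hk.1 (by omega) (by omega), key k j hk.1 hj (by omega)]
      rw [hsum]
      exact hU1 i (j + 1) hi (by omega) (by omega)
    · intro i j h
      rw [hn1] at h
      exact if_neg h
    · exact (hU1 n 1 hn le_rfl le_rfl).1
    · have hsum : ∑ k ∈ Finset.Icc 1 (n - 1), (Ftrunc n U k 1 - Ltrunc n U k 1)
          = ∑ k ∈ Finset.Icc 1 (n - 1), (U k (1 + 1) - U k 1) := by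
        apply Finset.sum_congr rfl
        intro k hk
        simp only [Finset.mem_Icc] at hk
        simp only [Ftrunc, Ltrunc]
        rw [if_pos ⟨hk.1, le_rfl, by omega⟩, if_pos ⟨hk.1, le_rfl, by omega⟩]
      rw [hsum]
      exact (hU1 n 1 hn le_rfl le_rfl).2
    · funext i j
      simp only [Ftrunc, Ltrunc]
      by_cases h : 1 ≤ i ∧ 1 ≤ j ∧ i + j ≤ n - 1
      · rw [if_pos h, if_pos h, if_pos ⟨h.1, by omega, by omega⟩,
          if_pos ⟨h.1, h.2.1, by omega⟩]
      · rw [if_neg h, if_neg h]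
end

section
/- Let p be a prime, ℓ ≥ 1, and let α_1,…,α_ℓ, β_1,…,β_ℓ be positive rationals. Let u_n be the Artin-Hasse coefficients (u_n = 0 for n < 0). Then det_{1≤i,j≤ℓ}( α_j β_i u_{pi−j} ) = det_{1≤j,k≤ℓ}( α_j β_k / (pk − j)! ), where 1/(pk−j)! is interpreted as 0 if pk − j < 0. -/
open PowerSeries Classical

/-- The coefficients `u_n` of the Artin-Hasse exponential, with `u_n = 0` for `n < 0`. -/
noncomputable def AHcoeff (p : ℕ) (n : ℤ) : ℚ :=
  if n < 0 then 0 else PowerSeries.coeff n.toNat (AHexp p)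

noncomputable def hser (p : ℕ) : PowerSeries ℚ :=
  PowerSeries.mk fun n => if ∃ k, n = p ^ (k+1) then (1 : ℚ) / n else 0

noncomputable def Gser (p : ℕ) : PowerSeries ℚ :=
  PowerSeries.mk fun n =>
    ∑ i ∈ Finset.range (n + 1), PowerSeries.coeff n ((hser p) ^ i) / (i.factorial : ℚ)

lemma inner_eq (p : ℕ) (hp : p.Prime) : AHinner p = X + hser p := by
  ext n
  rw [AHinner, hser, map_add, PowerSeries.coeff_mk, PowerSeries.coeff_mk, PowerSeries.coeff_X]
  by_cases h1 : n = 1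
  · subst h1
    rw [if_pos ⟨0, by simp⟩, if_pos rfl, if_neg, add_zero]
    · norm_num
    · rintro ⟨k, hk⟩
      have h2 := hp.two_le
      have h3 : p ≤ p ^ (k+1) := Nat.le_self_pow (by omega) p
      omega
  · rw [if_neg h1, zero_add]
    by_cases h2 : ∃ k, n = p ^ k
    · obtain ⟨k, hk⟩ := h2
      cases k with
      | zero => simp at hk; omega
      | succ k' =>
        rw [if_pos ⟨k'+1, hk⟩, if_pos ⟨k', hk⟩]
    · rw [if_neg h2, if_neg (fun ⟨k, hk⟩ => h2 ⟨k+1, hk⟩)]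

lemma tri_sum (n : ℕ) (F : ℕ → ℕ → ℚ) :
    ∑ m ∈ Finset.range (n+1), ∑ j ∈ Finset.range (m+1), F j (m - j)
      = ∑ j ∈ Finset.range (n+1), ∑ i ∈ Finset.range (n - j + 1), F j i := by
  rw [Finset.sum_sigma', Finset.sum_sigma']
  refine Finset.sum_nbij' (fun x => ⟨x.2, x.1 - x.2⟩) (fun x => ⟨x.1 + x.2, x.1⟩)
    ?_ ?_ ?_ ?_ ?_
  · rintro ⟨m, j⟩ h
    simp only [Finset.mem_sigma, Finset.mem_range] at h ⊢
    omega
  · rintro ⟨j, i⟩ h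
    simp only [Finset.mem_sigma, Finset.mem_range] at h ⊢
    omega
  · rintro ⟨m, j⟩ h
    simp only [Finset.mem_sigma, Finset.mem_range] at h
    have e : j + (m - j) = m := by omega
    show (⟨j + (m - j), j⟩ : Σ _ : ℕ, ℕ) = ⟨m, j⟩
    rw [e]
  · rintro ⟨j, i⟩ h
    simp only [Finset.mem_sigma, Finset.mem_range] at h
    have e : j + i - j = i := by omega
    show (⟨j, j + i - j⟩ : Σ _ : ℕ, ℕ) = ⟨j, i⟩
    rw [e]
  · rintro ⟨m, j⟩ h; rfl

lemma coeff_AHexp_eq (p : ℕ) (hp : p.Prime) (n : ℕ) :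
    PowerSeries.coeff n (AHexp p)
      = ∑ a ∈ Finset.range (n+1), PowerSeries.coeff (n - a) (Gser p) / (a.factorial : ℚ) := by
  rw [AHexp, PowerSeries.coeff_mk]
  have step1 : ∀ m ∈ Finset.range (n+1),
      PowerSeries.coeff n ((AHinner p) ^ m) / (m.factorial : ℚ)
        = ∑ k ∈ Finset.range (m+1),
            PowerSeries.coeff (n - k) ((hser p) ^ (m - k)) / ((k.factorial : ℚ) * ((m-k).factorial : ℚ)) := by
    intro m hm
    rw [Finset.mem_range] at hm
    rw [inner_eq p hp, add_pow, map_sum, Finset.sum_div]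
    refine Finset.sum_congr rfl ?_
    intro k hk
    rw [Finset.mem_range] at hk
    have hrw : (X : PowerSeries ℚ)^k * (hser p)^(m-k) * ((m.choose k : ℕ) : PowerSeries ℚ)
        = ((hser p)^(m-k) * PowerSeries.C ((m.choose k : ℕ) : ℚ)) * X^k := by
      rw [map_natCast (PowerSeries.C (R := ℚ))]; ring
    rw [hrw, PowerSeries.coeff_mul_X_pow', if_pos (by omega : k ≤ n), PowerSeries.coeff_mul_C]
    have hkm : k ≤ m := by omega
    have hcf : ((m.choose k : ℕ) : ℚ) * ((k.factorial : ℚ) * ((m-k).factorial : ℚ)) = (m.factorial : ℚ) := by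
      rw [← mul_assoc]; exact_mod_cast Nat.choose_mul_factorial_mul_factorial hkm
    have hk0 : (k.factorial : ℚ) ≠ 0 := Nat.cast_ne_zero.mpr k.factorial_ne_zero
    have hmk0 : ((m-k).factorial : ℚ) ≠ 0 := Nat.cast_ne_zero.mpr (m-k).factorial_ne_zero
    have hm0 : (m.factorial : ℚ) ≠ 0 := Nat.cast_ne_zero.mpr m.factorial_ne_zero
    field_simp
    linear_combination (PowerSeries.coeff (n-k) ((hser p)^(m-k))) * hcf
  rw [Finset.sum_congr rfl step1,
    tri_sum n (fun k i => PowerSeries.coeff (n - k) ((hser p) ^ i) / ((k.factorial : ℚ) * (i.factorial : ℚ)))]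
  refine Finset.sum_congr rfl ?_
  intro a _
  rw [Gser, PowerSeries.coeff_mk, Finset.sum_div]
  refine Finset.sum_congr rfl ?_
  intro i _
  rw [div_div, mul_comm (i.factorial : ℚ)]

lemma coeff_hser_pow (p : ℕ) : ∀ (i b : ℕ), ¬ p ∣ b → PowerSeries.coeff b ((hser p)^i) = 0 := by
  intro i
  induction i with
  | zero =>
    intro b hb
    have hb0 : b ≠ 0 := fun h => hb (h ▸ dvd_zero p)
    simp [PowerSeries.coeff_one, hb0]
  | succ i ih =>
    intro b hb
    rw [pow_succ, PowerSeries.coeff_mul]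
    refine Finset.sum_eq_zero ?_
    rintro ⟨x, y⟩ hxy
    rw [Finset.HasAntidiagonal.mem_antidiagonal] at hxy
    by_cases hx : p ∣ x
    · have hy : ¬ p ∣ y := fun h => hb (hxy ▸ dvd_add hx h)
      have hcy : PowerSeries.coeff y (hser p) = 0 := by
        rw [hser, PowerSeries.coeff_mk, if_neg]
        rintro ⟨k, hk⟩
        exact hy (hk ▸ dvd_pow_self p (Nat.succ_ne_zero k))
      simp [hcy]
    · simp [ih x hx]

lemma coeff_Gser_not_dvd (p b : ℕ) (hb : ¬ p ∣ b) : PowerSeries.coeff b (Gser p) = 0 := by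
  rw [Gser, PowerSeries.coeff_mk]
  refine Finset.sum_eq_zero fun i _ => ?_
  rw [coeff_hser_pow p i b hb, zero_div]

lemma coeff_Gser_zero (p : ℕ) : PowerSeries.coeff 0 (Gser p) = 1 := by
  rw [Gser, PowerSeries.coeff_mk]
  simp

lemma u_eq (p : ℕ) (hp : p.Prime) (n : ℕ) :
    PowerSeries.coeff n (AHexp p)
      = ∑ m ∈ Finset.range (n / p + 1),
          PowerSeries.coeff (p * m) (Gser p) / (((n - p * m).factorial : ℚ)) := by
  rw [coeff_AHexp_eq p hp n]
  rw [← Finset.sum_filter_of_ne (p := fun a => p ∣ (n - a))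
    (fun a _ hne => by
      by_contra hc
      exact hne (by rw [coeff_Gser_not_dvd p _ hc, zero_div]))]
  refine Finset.sum_nbij' (fun a => (n - a) / p) (fun m => n - p * m) ?_ ?_ ?_ ?_ ?_
  · intro a ha
    simp only [Finset.mem_filter, Finset.mem_range] at ha ⊢
    exact Nat.lt_succ_of_le (Nat.div_le_div_right (by omega))
  · intro m hm
    simp only [Finset.mem_filter, Finset.mem_range] at hm ⊢
    have hpm : p * m ≤ n := by
      rw [Nat.lt_succ_iff, Nat.le_div_iff_mul_le hp.pos] at hm
      rwa [mul_comm]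
    refine ⟨by omega, ?_⟩
    rw [Nat.sub_sub_self hpm]
    exact Dvd.intro m rfl
  · intro a ha
    simp only [Finset.mem_filter, Finset.mem_range] at ha
    show n - p * ((n - a) / p) = a
    rw [Nat.mul_div_cancel' ha.2, Nat.sub_sub_self (by omega)]
  · intro m hm
    simp only [Finset.mem_range] at hm
    have hpm : p * m ≤ n := by
      rw [Nat.lt_succ_iff, Nat.le_div_iff_mul_le hp.pos] at hm
      rwa [mul_comm]
    show (n - (n - p * m)) / p = m
    rw [Nat.sub_sub_self hpm, Nat.mul_div_cancel_left m hp.pos]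
  · intro a ha
    simp only [Finset.mem_filter, Finset.mem_range] at ha
    rw [Nat.mul_div_cancel' ha.2, Nat.sub_sub_self (by omega)]

noncomputable def Umat (p ℓ : ℕ) : Matrix (Fin ℓ) (Fin ℓ) ℚ :=
  Matrix.of fun i j => AHcoeff p ((p : ℤ) * ((i : ℤ) + 1) - ((j : ℤ) + 1))

noncomputable def Bmat (p ℓ : ℕ) : Matrix (Fin ℓ) (Fin ℓ) ℚ :=
  Matrix.of fun j k => if (j : ℕ) + 1 ≤ p * ((k : ℕ) + 1) then
    (1 : ℚ) / (((p * ((k : ℕ) + 1) - ((j : ℕ) + 1)).factorial : ℚ)) else 0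

noncomputable def Lmat (p ℓ : ℕ) : Matrix (Fin ℓ) (Fin ℓ) ℚ :=
  Matrix.of fun k i => if (k : ℕ) ≤ (i : ℕ) then
    PowerSeries.coeff (p * ((i : ℕ) - (k : ℕ))) (Gser p) else 0

lemma detLmat (p ℓ : ℕ) : (Lmat p ℓ).det = 1 := by
  have ht : (Lmat p ℓ).BlockTriangular id := by
    intro x y hxy
    simp only [id] at hxy
    rw [Fin.lt_def] at hxy
    simp only [Lmat, Matrix.of_apply]
    rw [if_neg (by omega)]
  rw [Matrix.det_of_upperTriangular ht]
  refine Finset.prod_eq_one fun x _ => ?_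
  simp [Lmat, coeff_Gser_zero]

lemma key (p : ℕ) (hp : p.Prime) (ℓ : ℕ) :
    (Umat p ℓ).transpose = Bmat p ℓ * Lmat p ℓ := by
  ext j i
  rw [Matrix.transpose_apply, Matrix.mul_apply]
  simp only [Umat, Bmat, Lmat, Matrix.of_apply]
  by_cases hji : (j : ℕ) + 1 ≤ p * ((i : ℕ) + 1)
  · set n := p * ((i : ℕ) + 1) - ((j : ℕ) + 1) with hn
    have harg : (p : ℤ) * ((i : ℤ) + 1) - ((j : ℤ) + 1) = (n : ℤ) := by
      rw [hn, Nat.cast_sub hji]; push_cast; ring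
    rw [AHcoeff, harg, if_neg (by simp), Int.toNat_natCast, u_eq p hp n]
    have hterm : ∀ k : Fin ℓ,
        (if (j : ℕ) + 1 ≤ p * ((k : ℕ) + 1) then
          (1 : ℚ) / (((p * ((k : ℕ) + 1) - ((j : ℕ) + 1)).factorial : ℚ)) else 0)
        * (if (k : ℕ) ≤ (i : ℕ) then
            PowerSeries.coeff (p * ((i : ℕ) - (k : ℕ))) (Gser p) else 0)
        = if ((j : ℕ) + 1 ≤ p * ((k : ℕ) + 1) ∧ (k : ℕ) ≤ (i : ℕ)) then
            PowerSeries.coeff (p * ((i : ℕ) - (k : ℕ))) (Gser p)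
              / (((p * ((k : ℕ) + 1) - ((j : ℕ) + 1)).factorial : ℚ)) else 0 := by
      intro k
      by_cases h1 : (j : ℕ) + 1 ≤ p * ((k : ℕ) + 1)
      · by_cases h2 : (k : ℕ) ≤ (i : ℕ)
        · rw [if_pos h1, if_pos h2, if_pos ⟨h1, h2⟩]; ring
        · simp [h1, h2]
      · simp [h1]
    rw [Finset.sum_congr rfl (fun k _ => hterm k), ← Finset.sum_filter]
    symm
    refine Finset.sum_nbij' (fun k : Fin ℓ => (i : ℕ) - (k : ℕ))
      (fun m => (⟨(i : ℕ) - m, lt_of_le_of_lt (Nat.sub_le _ _) i.isLt⟩ : Fin ℓ))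
      ?_ ?_ ?_ ?_ ?_
    · intro k hk
      simp only [Finset.mem_filter, Finset.mem_univ, true_and] at hk
      obtain ⟨h1, h2⟩ := hk
      simp only [Finset.mem_range]
      rw [Nat.lt_succ_iff, Nat.le_div_iff_mul_le hp.pos]
      have e1 : p * ((i : ℕ) - (k : ℕ)) + p * (k : ℕ) = p * (i : ℕ) := by
        rw [← Nat.mul_add, Nat.sub_add_cancel h2]
      have e2 : p * ((i : ℕ) + 1) = p * (i : ℕ) + p := by ring
      have e3 : p * ((k : ℕ) + 1) = p * (k : ℕ) + p := by ring
      have e4 : ((i : ℕ) - (k : ℕ)) * p = p * ((i : ℕ) - (k : ℕ)) := mul_comm _ _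
      omega
    · intro m hm
      simp only [Finset.mem_range] at hm
      rw [Nat.lt_succ_iff, Nat.le_div_iff_mul_le hp.pos] at hm
      simp only [Finset.mem_filter, Finset.mem_univ, true_and]
      have e2 : p * ((i : ℕ) + 1) = p * (i : ℕ) + p := by ring
      have hmi : m ≤ (i : ℕ) := by
        by_contra hc
        push_neg at hc
        have : p * ((i : ℕ) + 1) ≤ p * m := Nat.mul_le_mul_left p hc
        have e5 : m * p = p * m := mul_comm _ _
        omega
      have e1 : p * ((i : ℕ) - m) + p * m = p * (i : ℕ) := by
        rw [← Nat.mul_add, Nat.sub_add_cancel hmi]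
      have e3 : p * (((i : ℕ) - m) + 1) = p * ((i : ℕ) - m) + p := by ring
      have e5 : m * p = p * m := mul_comm _ _
      refine ⟨?_, Nat.sub_le _ _⟩
      show (j : ℕ) + 1 ≤ p * (((i : ℕ) - m) + 1)
      omega
    · intro k hk
      simp only [Finset.mem_filter, Finset.mem_univ, true_and] at hk
      apply Fin.ext
      show (i : ℕ) - ((i : ℕ) - (k : ℕ)) = (k : ℕ)
      omega
    · intro m hm
      simp only [Finset.mem_range] at hm
      rw [Nat.lt_succ_iff, Nat.le_div_iff_mul_le hp.pos] at hm
      have e2 : p * ((i : ℕ) + 1) = p * (i : ℕ) + p := by ring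
      have hmi : m ≤ (i : ℕ) := by
        by_contra hc
        push_neg at hc
        have : p * ((i : ℕ) + 1) ≤ p * m := Nat.mul_le_mul_left p hc
        have e5 : m * p = p * m := mul_comm _ _
        omega
      show (i : ℕ) - ((i : ℕ) - m) = m
      omega
    · intro k hk
      simp only [Finset.mem_filter, Finset.mem_univ, true_and] at hk
      obtain ⟨h1, h2⟩ := hk
      have e1 : p * ((i : ℕ) - (k : ℕ)) + p * (k : ℕ) = p * (i : ℕ) := by
        rw [← Nat.mul_add, Nat.sub_add_cancel h2]
      have e2 : p * ((i : ℕ) + 1) = p * (i : ℕ) + p := by ring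
      have e3 : p * ((k : ℕ) + 1) = p * (k : ℕ) + p := by ring
      have e : n - p * ((i : ℕ) - (k : ℕ)) = p * ((k : ℕ) + 1) - ((j : ℕ) + 1) := by omega
      rw [e]
  · rw [AHcoeff, if_pos]
    · symm
      refine Finset.sum_eq_zero fun k _ => ?_
      by_cases h1 : (j : ℕ) + 1 ≤ p * ((k : ℕ) + 1)
      · by_cases h2 : (k : ℕ) ≤ (i : ℕ)
        · exact absurd (h1.trans (Nat.mul_le_mul_left p (by omega))) hji
        · simp [h2]
      · simp [h1]
    · have h0 : p * ((i : ℕ) + 1) < (j : ℕ) + 1 := by omega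
      have h2 : ((p * ((i : ℕ) + 1) : ℕ) : ℤ) < ((j : ℕ) : ℤ) + 1 := by exact_mod_cast h0
      have h3 : ((p * ((i : ℕ) + 1) : ℕ) : ℤ) = (p : ℤ) * ((i : ℤ) + 1) := by push_cast; ring
      omega

theorem det_scaled_AHcoeff (p : ℕ) (hp : p.Prime) (ℓ : ℕ) (hℓ : 1 ≤ ℓ)
    (α β : Fin ℓ → ℚ) (hα : ∀ j, 0 < α j) (hβ : ∀ i, 0 < β i) :
    Matrix.det (Matrix.of fun i j : Fin ℓ =>
        α j * β i * AHcoeff p ((p : ℤ) * ((i : ℤ) + 1) - ((j : ℤ) + 1)))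
      = Matrix.det (Matrix.of fun j k : Fin ℓ =>
          if (j : ℕ) + 1 ≤ p * ((k : ℕ) + 1) then
            α j * β k / ((p * ((k : ℕ) + 1) - ((j : ℕ) + 1)).factorial : ℚ)
          else 0) := by
  have e1 : (Matrix.of fun i j : Fin ℓ =>
        α j * β i * AHcoeff p ((p : ℤ) * ((i : ℤ) + 1) - ((j : ℤ) + 1)))
      = Matrix.of (fun i j : Fin ℓ =>
          α j * ((Matrix.of fun i j : Fin ℓ => β i * Umat p ℓ i j) i j)) := by
    ext i j
    simp only [Matrix.of_apply, Umat]
    ring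
  have e2 : (Matrix.of fun j k : Fin ℓ =>
          if (j : ℕ) + 1 ≤ p * ((k : ℕ) + 1) then
            α j * β k / ((p * ((k : ℕ) + 1) - ((j : ℕ) + 1)).factorial : ℚ)
          else 0)
      = Matrix.of (fun j k : Fin ℓ =>
          α j * ((Matrix.of fun j k : Fin ℓ => β k * Bmat p ℓ j k) j k)) := by
    ext j k
    simp only [Matrix.of_apply, Bmat]
    by_cases h : (j : ℕ) + 1 ≤ p * ((k : ℕ) + 1)
    · rw [if_pos h, if_pos h]; ring
    · rw [if_neg h, if_neg h]; ring
  rw [e1, Matrix.det_mul_row, Matrix.det_mul_column, e2, Matrix.det_mul_column,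
    Matrix.det_mul_row]
  have hUB : (Umat p ℓ).det = (Bmat p ℓ).det := by
    rw [← Matrix.det_transpose (Umat p ℓ), key p hp ℓ, Matrix.det_mul, detLmat, mul_one]
  rw [hUB]
end
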